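/- Let p, q ∈ (0,1) with p ≠ q, φ ∈ [0,2π) with cos φ ≠ 0. Set μ₁ = √(pq), μ₂ = √((1−p)(1−q)), Δp = 2p−1, Δq = 2q−1, λ_max = √(μ₁² + μ₂² + 2μ₁μ₂|cos φ|), λ_min = √(μ₁² + μ₂² − 2μ₁μ₂|cos φ|), a_n = |(μ₁ + e^{−iφ}μ₂)^n + (μ₁ − e^{−iφ}μ₂)^n| / √((1+Δp^n)(1+Δq^n)), and b_n = |(μ₁ + e^{−iφ}μ₂)^n − (μ₁ − e^{−iφ}μ₂)^n| / √((1−Δp^n)(1−Δq^n)). Then for every n ≥ 1: (1 − λ_min/λ_max)² λ_max^{2n} < ((1+Δp^n)/2) a_n² + ((1−Δp^n)/2) b_n² < λ_max^{2n} / (q(1−q)). -/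

import Mathlib

/-!
The factors `1 ± Δpⁿ` cancel against the normalisations of `aₙ` and `bₙ`: with
`A = (μ₁ + e^{−iφ}μ₂)ⁿ`, `B = (μ₁ − e^{−iφ}μ₂)ⁿ` and `d = Δqⁿ` the error is
`|A + B|² / (2(1 + d)) + |A − B|² / (2(1 − d)) = (|A|² + |B|² − 2 Re(A B̄) d) / (1 − d²)`.
The moduli of `A` and `B` are `λ_maxⁿ` and `λ_minⁿ`, in an order fixed by the sign of `cos φ`.
Bounding `|Re(A B̄) d|` by `|A| |B| |d|` puts the error above `(|A| − |B|)²`, which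
dominates `(1 − λ_min/λ_max)² λ_max^{2n}`, and strictly below `2|A|² / (1 − |d|)`, while
`1 − |d| ≥ 1 − |2q − 1| ≥ 2q(1 − q)`. The lower bound is strict unless `λ_min = 0` and `Δq = 0`;
but `λ_min = 0` forces `μ₁ = μ₂`, i.e. `p + q = 1`, which with `q = 1/2` would give `p = q`.
-/

open Filter

noncomputable section

/-- a_n = |(μ₁+e^{−iφ}μ₂)^n + (μ₁−e^{−iφ}μ₂)^n| / √((1+Δp^n)(1+Δq^n)), the modulus of
the overlap ⟨0_q|0_p⟩ of the normalized even-parity components. -/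
def aSeq (p q φ : ℝ) (n : ℕ) : ℝ :=
  norm (((Real.sqrt (p * q) : ℂ) +
      Complex.exp (-(Complex.I * φ)) * (Real.sqrt ((1 - p) * (1 - q)) : ℂ)) ^ n +
    ((Real.sqrt (p * q) : ℂ) -
      Complex.exp (-(Complex.I * φ)) * (Real.sqrt ((1 - p) * (1 - q)) : ℂ)) ^ n) /
  Real.sqrt ((1 + (2 * p - 1) ^ n) * (1 + (2 * q - 1) ^ n))

/-- b_n = |(μ₁+e^{−iφ}μ₂)^n − (μ₁−e^{−iφ}μ₂)^n| / √((1−Δp^n)(1−Δq^n)), the modulus of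
the overlap ⟨1_q|1_p⟩ of the normalized odd-parity components. -/
def bSeq (p q φ : ℝ) (n : ℕ) : ℝ :=
  norm (((Real.sqrt (p * q) : ℂ) +
      Complex.exp (-(Complex.I * φ)) * (Real.sqrt ((1 - p) * (1 - q)) : ℂ)) ^ n -
    ((Real.sqrt (p * q) : ℂ) -
      Complex.exp (-(Complex.I * φ)) * (Real.sqrt ((1 - p) * (1 - q)) : ℂ)) ^ n) /
  Real.sqrt ((1 - (2 * p - 1) ^ n) * (1 - (2 * q - 1) ^ n))

open Complex ComplexConjugate

def parityError (A B : ℂ) (d : ℝ) : ℝ :=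
  ‖A + B‖ ^ 2 / (2 * (1 + d)) + ‖A - B‖ ^ 2 / (2 * (1 - d))

theorem parityError_comm (A B : ℂ) (d : ℝ) : parityError B A d = parityError A B d := by
  rw [parityError, parityError, add_comm B, norm_sub_rev]

theorem parityError_eq {d : ℝ} (hd : |d| < 1) (A B : ℂ) :
    parityError A B d = (‖A‖ ^ 2 + ‖B‖ ^ 2 - 2 * (A * conj B).re * d) / (1 - d ^ 2) := by
  obtain ⟨hd₁, hd₂⟩ := abs_lt.mp hd
  have h₁ : 1 + d ≠ 0 := by linarith
  have h₂ : 1 - d ≠ 0 := by linarith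
  have h₃ : 1 - d ^ 2 ≠ 0 := by nlinarith
  simp only [parityError, Complex.sq_norm, normSq_add, normSq_sub]
  field_simp
  ring

theorem abs_re_mul_conj_mul_le (A B : ℂ) (d : ℝ) :
    |(A * conj B).re * d| ≤ ‖A‖ * ‖B‖ * |d| := by
  rw [abs_mul, ← norm_conj B, ← norm_mul]
  exact mul_le_mul_of_nonneg_right (abs_re_le_norm _) (abs_nonneg d)

theorem sq_sub_norm_lt_parityError {d : ℝ} (hd : |d| < 1) {A B : ℂ} (hA : A ≠ 0)
    (hBd : B ≠ 0 ∨ d ≠ 0) : (‖A‖ - ‖B‖) ^ 2 < parityError A B d := by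
  rw [parityError_eq hd]
  have hcross := (abs_le.mp (abs_re_mul_conj_mul_le A B d)).2
  have hd2 : 0 < 1 - d ^ 2 := by nlinarith [sq_abs d, abs_nonneg d]
  rw [lt_div_iff₀ hd2]
  have hApos : 0 < ‖A‖ := norm_pos_iff.mpr hA
  by_cases hB : B = 0
  · have hd0 : d ≠ 0 := hBd.resolve_left (not_not.mpr hB)
    subst hB
    simp only [norm_zero, map_zero, mul_zero, zero_re, sub_zero, zero_mul]
    nlinarith [mul_pos (pow_pos hApos 2) (pow_pos (abs_pos.mpr hd0) 2), sq_abs d]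
  · have hBpos : 0 < ‖B‖ := norm_pos_iff.mpr hB
    nlinarith [mul_pos (mul_pos hApos hBpos) (sub_pos.mpr hd), sq_nonneg (‖A‖ - ‖B‖),
      sq_nonneg d, abs_nonneg d]

theorem parityError_lt {d : ℝ} (hd : |d| < 1) {A B : ℂ} (hBA : ‖B‖ < ‖A‖) :
    parityError A B d < 2 * ‖A‖ ^ 2 / (1 - |d|) := by
  rw [parityError_eq hd]
  have hcross := (abs_le.mp (abs_re_mul_conj_mul_le A B d)).1
  have hd1 : 0 < 1 - |d| := sub_pos.mpr hd
  have hsplit : 1 - d ^ 2 = (1 - |d|) * (1 + |d|) := by rw [← sq_abs d]; ring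
  rw [hsplit, div_lt_div_iff₀ (by positivity) hd1]
  have hN : ‖A‖ ^ 2 + ‖B‖ ^ 2 - 2 * (A * conj B).re * d < 2 * ‖A‖ ^ 2 * (1 + |d|) := by
    have hgap := sub_pos.mpr hBA
    have hA0 : 0 < ‖A‖ := (norm_nonneg B).trans_lt hBA
    nlinarith [mul_pos hgap (add_pos_of_pos_of_nonneg hA0 (norm_nonneg B)),
      mul_nonneg (mul_nonneg (abs_nonneg d) hA0.le) hgap.le]
  nlinarith [mul_lt_mul_of_pos_right hN hd1]

theorem one_sub_div_sq_mul_pow_le {l L : ℝ} (hl : 0 ≤ l) (hlL : l ≤ L) (hL : 0 < L) {n : ℕ}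
    (hn : n ≠ 0) : (1 - l / L) ^ 2 * L ^ (2 * n) ≤ (L ^ n - l ^ n) ^ 2 := by
  obtain ⟨m, rfl⟩ := Nat.exists_eq_add_one_of_ne_zero hn
  have hrw : (1 - l / L) ^ 2 * L ^ (2 * (m + 1)) = (L ^ (m + 1) - l * L ^ m) ^ 2 := by
    field_simp
    ring
  rw [hrw]
  have hlm : l ^ (m + 1) ≤ l * L ^ m := by
    rw [pow_succ']
    exact mul_le_mul_of_nonneg_left (pow_le_pow_left₀ hl hlL m) hl
  have hnonneg : 0 ≤ L ^ (m + 1) - l * L ^ m := by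
    rw [pow_succ']
    nlinarith [pow_nonneg hL.le m]
  exact pow_le_pow_left₀ hnonneg (by linarith) 2

theorem parityError_bounds {A B : ℂ} {l L d Q : ℝ} {n : ℕ} (hn : n ≠ 0) (hA : ‖A‖ = L ^ n)
    (hB : ‖B‖ = l ^ n) (hl : 0 ≤ l) (hlL : l < L) (hd : |d| < 1) (hQ : 0 < Q)
    (hdQ : 2 * Q ≤ 1 - |d|) (hld : l ≠ 0 ∨ d ≠ 0) :
    (1 - l / L) ^ 2 * L ^ (2 * n) < parityError A B d ∧
      parityError A B d < L ^ (2 * n) / Q := by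
  have hL : 0 < L := hl.trans_lt hlL
  have hA0 : A ≠ 0 := norm_ne_zero_iff.mp (hA ▸ pow_ne_zero n hL.ne')
  have hBd : B ≠ 0 ∨ d ≠ 0 := hld.imp_left fun h ↦ norm_ne_zero_iff.mp (hB ▸ pow_ne_zero n h)
  constructor
  · calc (1 - l / L) ^ 2 * L ^ (2 * n) ≤ (‖A‖ - ‖B‖) ^ 2 := by
          rw [hA, hB]; exact one_sub_div_sq_mul_pow_le hl hlL.le hL hn
      _ < parityError A B d := sq_sub_norm_lt_parityError hd hA0 hBd
  · calc parityError A B d < 2 * ‖A‖ ^ 2 / (1 - |d|) :=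
          parityError_lt hd (by rw [hA, hB]; exact pow_lt_pow_left₀ hlL hl hn)
      _ ≤ 2 * ‖A‖ ^ 2 / (2 * Q) := div_le_div_of_nonneg_left (by positivity) (by positivity) hdQ
      _ = L ^ (2 * n) / Q := by rw [hA, ← pow_mul, mul_comm n 2]; field_simp

theorem norm_ofReal_add_exp_mul_ofReal (x y θ : ℝ) :
    ‖(x : ℂ) + exp (-(I * θ)) * y‖ = √(x ^ 2 + y ^ 2 + 2 * x * y * Real.cos θ) := by
  rw [← Real.sqrt_sq (norm_nonneg _), Complex.sq_norm, normSq_apply]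
  congr 1
  simp only [add_re, ofReal_re, mul_re, exp_re, neg_re, I_re, zero_mul, I_im, ofReal_im,
    mul_zero, sub_self, neg_zero, Real.exp_zero, neg_im, mul_im, one_mul, zero_add, Real.cos_neg,
    exp_im, Real.sin_neg, mul_neg, sub_zero, add_im, neg_mul, neg_neg]
  linear_combination y ^ 2 * Real.sin_sq_add_cos_sq θ

theorem norm_ofReal_sub_exp_mul_ofReal (x y θ : ℝ) :
    ‖(x : ℂ) - exp (-(I * θ)) * y‖ = √(x ^ 2 + y ^ 2 - 2 * x * y * Real.cos θ) := by
  have h := norm_ofReal_add_exp_mul_ofReal x (-y) θ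
  push_cast at h
  rw [mul_neg, ← sub_eq_add_neg] at h
  rw [h]
  ring_nf

def zPlus (p q φ : ℝ) : ℂ :=
  (Real.sqrt (p * q) : ℂ) + Complex.exp (-(Complex.I * φ)) * (Real.sqrt ((1 - p) * (1 - q)) : ℂ)

def zMinus (p q φ : ℝ) : ℂ :=
  (Real.sqrt (p * q) : ℂ) - Complex.exp (-(Complex.I * φ)) * (Real.sqrt ((1 - p) * (1 - q)) : ℂ)

theorem abs_two_mul_sub_one_pow_lt_one {p : ℝ} (hp : p ∈ Set.Ioo (0 : ℝ) 1) {n : ℕ} (hn : n ≠ 0) :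
    |(2 * p - 1) ^ n| < 1 := by
  rw [abs_pow]
  exact pow_lt_one₀ (abs_nonneg _) (abs_lt.mpr ⟨by linarith [hp.1], by linarith [hp.2]⟩) hn

theorem half_mul_div_sqrt_mul_sq {u v : ℝ} (hu : 0 < u) (hv : 0 < v) (r : ℝ) :
    u / 2 * (r / √(u * v)) ^ 2 = r ^ 2 / (2 * v) := by
  rw [div_pow, Real.sq_sqrt (mul_pos hu hv).le]
  field_simp

theorem typeIError_eq_parityError {p q : ℝ} (hp : p ∈ Set.Ioo (0 : ℝ) 1)
    (hq : q ∈ Set.Ioo (0 : ℝ) 1) (φ : ℝ) {n : ℕ} (hn : n ≠ 0) :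
    (1 + (2 * p - 1) ^ n) / 2 * aSeq p q φ n ^ 2 + (1 - (2 * p - 1) ^ n) / 2 * bSeq p q φ n ^ 2 =
      parityError (zPlus p q φ ^ n) (zMinus p q φ ^ n) ((2 * q - 1) ^ n) := by
  obtain ⟨hp₁, hp₂⟩ := abs_lt.mp (abs_two_mul_sub_one_pow_lt_one hp hn)
  obtain ⟨hq₁, hq₂⟩ := abs_lt.mp (abs_two_mul_sub_one_pow_lt_one hq hn)
  rw [aSeq, bSeq, half_mul_div_sqrt_mul_sq (by linarith) (by linarith),
    half_mul_div_sqrt_mul_sq (by linarith) (by linarith)]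
  rfl

theorem two_mul_mul_one_sub_le_one_sub_abs_pow {q : ℝ} (hq : q ∈ Set.Icc (0 : ℝ) 1) {n : ℕ}
    (hn : n ≠ 0) : 2 * (q * (1 - q)) ≤ 1 - |(2 * q - 1) ^ n| := by
  have hq' : |2 * q - 1| ≤ 1 := abs_le.mpr ⟨by linarith [hq.1], by linarith [hq.2]⟩
  have h := pow_le_of_le_one (abs_nonneg _) hq' hn
  rw [abs_pow]
  rcases abs_cases (2 * q - 1) with ⟨h', _⟩ | ⟨h', _⟩ <;> nlinarith [hq.1, hq.2]

theorem sq_sub_le_sq_add_sq_sub_two_mul_mul {x y c : ℝ} (hx : 0 ≤ x) (hy : 0 ≤ y)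
    (hc : c ≤ 1) : (x - y) ^ 2 ≤ x ^ 2 + y ^ 2 - 2 * x * y * c := by
  nlinarith [mul_nonneg hx hy]

theorem add_eq_one_of_sqrt_mul_eq {p q : ℝ} (hpq : 0 ≤ p * q) (h1pq : 0 ≤ (1 - p) * (1 - q))
    (h : √(p * q) = √((1 - p) * (1 - q))) : p + q = 1 := by
  linear_combination (Real.sqrt_inj hpq h1pq).mp h

theorem parityError_pow_bounds {x y θ d Q : ℝ} {n : ℕ} (hx : 0 < x) (hy : 0 < y)
    (hθ : Real.cos θ ≠ 0) (hn : n ≠ 0) (hd : |d| < 1) (hQ : 0 < Q) (hdQ : 2 * Q ≤ 1 - |d|)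
    (hxyd : x ≠ y ∨ d ≠ 0) :
    let L := √(x ^ 2 + y ^ 2 + 2 * x * y * |Real.cos θ|)
    let l := √(x ^ 2 + y ^ 2 - 2 * x * y * |Real.cos θ|)
    (1 - l / L) ^ 2 * L ^ (2 * n) <
        parityError (((x : ℂ) + exp (-(I * θ)) * y) ^ n) (((x : ℂ) - exp (-(I * θ)) * y) ^ n) d ∧
      parityError (((x : ℂ) + exp (-(I * θ)) * y) ^ n) (((x : ℂ) - exp (-(I * θ)) * y) ^ n) d <
        L ^ (2 * n) / Q := by
  intro L l
  have hgap := sq_sub_le_sq_add_sq_sub_two_mul_mul hx.le hy.le (Real.abs_cos_le_one θ)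
  have hlL : l < L := Real.sqrt_lt_sqrt ((sq_nonneg _).trans hgap)
    (by nlinarith [mul_pos (mul_pos hx hy) (abs_pos.mpr hθ)])
  have hld : l ≠ 0 ∨ d ≠ 0 := hxyd.imp_left fun hxy hl ↦ hxy <| sub_eq_zero.mp <|
    pow_eq_zero_iff two_ne_zero |>.mp <| le_antisymm (hgap.trans (Real.sqrt_eq_zero'.mp hl))
      (sq_nonneg _)
  rcases hθ.lt_or_gt with hneg | hpos
  · rw [← parityError_comm]
    refine parityError_bounds hn ?_ ?_ (Real.sqrt_nonneg _) hlL hd hQ hdQ hld <;>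
      simp only [norm_pow, norm_ofReal_add_exp_mul_ofReal, norm_ofReal_sub_exp_mul_ofReal, L, l,
        abs_of_neg hneg] <;> ring_nf
  · refine parityError_bounds hn ?_ ?_ (Real.sqrt_nonneg _) hlL hd hQ hdQ hld <;>
      simp only [norm_pow, norm_ofReal_add_exp_mul_ofReal, norm_ofReal_sub_exp_mul_ofReal, L, l,
        abs_of_pos hpos]

theorem typeI_error_bounds (p q φ : ℝ) (hp : p ∈ Set.Ioo (0 : ℝ) 1)
    (hq : q ∈ Set.Ioo (0 : ℝ) 1) (hpq : p ≠ q)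
    (hcos : Real.cos φ ≠ 0) (n : ℕ) (hn : 1 ≤ n) :
    (1 - Real.sqrt (Real.sqrt (p * q) ^ 2 + Real.sqrt ((1 - p) * (1 - q)) ^ 2 -
          2 * Real.sqrt (p * q) * Real.sqrt ((1 - p) * (1 - q)) * |Real.cos φ|) /
        Real.sqrt (Real.sqrt (p * q) ^ 2 + Real.sqrt ((1 - p) * (1 - q)) ^ 2 +
          2 * Real.sqrt (p * q) * Real.sqrt ((1 - p) * (1 - q)) * |Real.cos φ|)) ^ 2 *
      Real.sqrt (Real.sqrt (p * q) ^ 2 + Real.sqrt ((1 - p) * (1 - q)) ^ 2 +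
          2 * Real.sqrt (p * q) * Real.sqrt ((1 - p) * (1 - q)) * |Real.cos φ|) ^ (2 * n)
    < (1 + (2 * p - 1) ^ n) / 2 * aSeq p q φ n ^ 2 +
        (1 - (2 * p - 1) ^ n) / 2 * bSeq p q φ n ^ 2 ∧
    (1 + (2 * p - 1) ^ n) / 2 * aSeq p q φ n ^ 2 +
        (1 - (2 * p - 1) ^ n) / 2 * bSeq p q φ n ^ 2
    < Real.sqrt (Real.sqrt (p * q) ^ 2 + Real.sqrt ((1 - p) * (1 - q)) ^ 2 +
          2 * Real.sqrt (p * q) * Real.sqrt ((1 - p) * (1 - q)) * |Real.cos φ|) ^ (2 * n) /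
      (q * (1 - q)) := by
  have hn0 : n ≠ 0 := Nat.one_le_iff_ne_zero.mp hn
  rw [typeIError_eq_parityError hp hq φ hn0]
  obtain ⟨hp0, hp1⟩ := hp
  obtain ⟨hq0, hq1⟩ := hq
  have h1pq : 0 < (1 - p) * (1 - q) := mul_pos (by linarith) (by linarith)
  refine parityError_pow_bounds (by positivity) (Real.sqrt_pos.mpr h1pq) hcos hn0
    (abs_two_mul_sub_one_pow_lt_one ⟨hq0, hq1⟩ hn0) (mul_pos hq0 (by linarith))
    (two_mul_mul_one_sub_le_one_sub_abs_pow ⟨hq0.le, hq1.le⟩ hn0) ?_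
  by_contra! h
  have hsum := add_eq_one_of_sqrt_mul_eq (by positivity) h1pq.le h.1
  exact hpq (by linarith [pow_eq_zero_iff hn0 |>.mp h.2])
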